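/- Let (X, δ) be a complete diversity and let D ⊆ X be a dense subset (with respect to the induced metric) such that the restricted diversity (D, δ) has the extension property. Then (X, δ) has the extension property. (In particular, if a separable diversity has the extension property, then so does its completion.) -/

import Mathlib

open scoped Classical

/-- A diversity on `X`: a real-valued function on finite subsets satisfying
(D1) nonnegativity with `δ A = 0 ↔ |A| ≤ 1`, and (D2) the triangle inequality. -/
structure Diversity (X : Type*) where
  δ : Finset X → ℝ
  nonneg : ∀ A : Finset X, 0 ≤ δ A
  eq_zero_iff : ∀ A : Finset X, δ A = 0 ↔ A.card ≤ 1
  triangle : ∀ A B C : Finset X, B.Nonempty → δ (A ∪ C) ≤ δ (A ∪ B) + δ (B ∪ C)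

/-- An admissible function on a diversity (a one-point extension). -/
structure IsAdmissible {X : Type*} (D : Diversity X) (f : Finset X → ℝ) : Prop where
  empty : f ∅ = 0
  le : ∀ A : Finset X, D.δ A ≤ f A
  tri : ∀ A B C : Finset X, C.Nonempty → f (A ∪ B) ≤ f (A ∪ C) + D.δ (B ∪ C)
  subadd : ∀ A B : Finset X, f (A ∪ B) ≤ f A + f B

/-- Restriction of a diversity to a subset. -/
noncomputable def Diversity.restrict {X : Type*} (D : Diversity X) (S : Set X) : Diversity S where
  δ A := D.δ (A.image Subtype.val)
  nonneg A := D.nonneg _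
  eq_zero_iff A := by
    rw [D.eq_zero_iff, Finset.card_image_of_injective _ Subtype.val_injective]
  triangle A B C hB := by
    have h := D.triangle (A.image Subtype.val) (B.image Subtype.val) (C.image Subtype.val)
      (hB.image _)
    simpa [Finset.image_union] using h

/-- Separability of the induced metric `d a b = δ {a, b}`. -/
def Diversity.SeparableD {X : Type*} (D : Diversity X) : Prop :=
  ∃ s : Set X, s.Countable ∧ ∀ x : X, ∀ ε : ℝ, 0 < ε → ∃ y ∈ s, D.δ {x, y} < ε

/-- Completeness of the induced metric `d a b = δ {a, b}`. -/
def Diversity.CompleteD {X : Type*} (D : Diversity X) : Prop :=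
  ∀ u : ℕ → X, (∀ ε : ℝ, 0 < ε → ∃ N : ℕ, ∀ m ≥ N, ∀ n ≥ N, D.δ {u m, u n} < ε) →
    ∃ x : X, ∀ ε : ℝ, 0 < ε → ∃ N : ℕ, ∀ n ≥ N, D.δ {u n, x} < ε

/-- The diversity `δ̂` on (finite sets of) admissible functions. -/
noncomputable def hatδ {X : Type*} (F : Finset (Finset X → ℝ)) : ℝ :=
  if F.card ≤ 1 then 0
  else sSup { r : ℝ | ∃ j ∈ F, ∃ A : (Finset X → ℝ) → Finset X,
    r = j ((F.erase j).biUnion A) - ∑ i ∈ F.erase j, i (A i) }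

/-- The canonical maximal extension `f_S^X` of an admissible function on `S ⊆ X`. -/
noncomputable def extFun {X : Type*} (D : Diversity X) (S : Set X) (f : Finset S → ℝ)
    (A : Finset X) : ℝ :=
  sInf { r : ℝ | ∃ (B : Finset S) (As : S → Finset X),
    B.biUnion As = A ∧ r = f B + ∑ b ∈ B, D.δ (insert (b : X) (As b)) }

/-- An admissible function is finitely supported if it is the canonical extension
of an admissible function on some finite nonempty `S ⊆ X`. -/
def FinitelySupported {X : Type*} (D : Diversity X) (f : Finset X → ℝ) : Prop :=
  ∃ S : Set X, S.Finite ∧ S.Nonempty ∧ ∃ g : Finset S → ℝ,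
    IsAdmissible (D.restrict S) g ∧ f = extFun D S g

/-- The extension property for a diversity. -/
def Diversity.ExtensionProp {X : Type*} (D : Diversity X) : Prop :=
  ∀ F : Finset X, ∀ f : Finset ((F : Set X)) → ℝ,
    IsAdmissible (D.restrict (F : Set X)) f →
    ∃ x : X, ∀ A : Finset ((F : Set X)), D.δ (insert x (A.image Subtype.val)) = f A

/-- The approximate extension property for a diversity. -/
def Diversity.ApproxExtensionProp {X : Type*} (D : Diversity X) : Prop :=
  ∀ F : Finset X, ∀ f : Finset ((F : Set X)) → ℝ,
    IsAdmissible (D.restrict (F : Set X)) f →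
    ∀ ε : ℝ, 0 < ε →
      ∃ x : X, ∀ A : Finset ((F : Set X)), |D.δ (insert x (A.image Subtype.val)) - f A| ≤ ε

/-- Ultrahomogeneity: isomorphisms between finite subsets extend to automorphisms. -/
def Diversity.Ultrahomogeneous {X : Type*} (D : Diversity X) : Prop :=
  ∀ (A A' : Finset X) (φ : ((A : Set X)) → ((A' : Set X))), Function.Bijective φ →
    (∀ B : Finset ((A : Set X)),
      D.δ (B.image (fun b => (φ b : X))) = D.δ (B.image Subtype.val)) →
    ∃ Φ : X → X, Function.Bijective Φ ∧ (∀ C : Finset X, D.δ (C.image Φ) = D.δ C) ∧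
      ∀ a : ((A : Set X)), Φ a = (φ a : X)

/-!
Density and the extension property of `S` give the approximate extension property of `X`: move
the finitely many points of `F` to nearby points of `S`, extend `f` to these through the
canonical (maximal) extension, realise it exactly in `S`, and move back, paying the distances
moved. Completeness then upgrades approximate to exact realisation. Having realised `f` up to
`2⁻ᵏ` by `zₖ`, amalgamate `zₖ` into the data so that the enlarged admissible function takes a
value `≤ 2⁻ᵏ` on `{zₖ}`, and realise that function up to `2⁻ᵏ⁻¹` by `zₖ₊₁`. Then
`δ {zₖ, zₖ₊₁} = O(2⁻ᵏ)`, the `zₖ` converge, and the limit realises `f` exactly.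
-/

open Finset Filter Topology

namespace Finset

theorem le_of_subset_of_forall_le_insert {X : Type*} {g : Finset X → ℝ} {G : Finset X}
    (h : ∀ U ⊆ G, ∀ e ∈ G, g U ≤ g (insert e U)) {A B : Finset X} (hAB : A ⊆ B)
    (hB : B ⊆ G) : g A ≤ g B := by
  have key : ∀ E : Finset X, A ∪ E ⊆ G → g A ≤ g (A ∪ E) := by
    intro E
    induction E using Finset.induction_on with
    | empty => simp
    | insert e E _ ih =>
      intro hE
      rw [union_insert] at hE ⊢
      exact (ih ((subset_insert _ _).trans hE)).trans
        (h _ ((subset_insert _ _).trans hE) e (hE (mem_insert_self _ _)))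
  simpa [union_sdiff_of_subset hAB] using key (B \ A) (by rwa [union_sdiff_of_subset hAB])

theorem image_val_subtype {X : Type*} {p : X → Prop} [DecidablePred p] {A : Finset X}
    (h : ∀ a ∈ A, p a) : (A.subtype p).image Subtype.val = A := by
  simpa [map_eq_image] using subtype_map_of_mem h

theorem subtype_image_val {X : Type*} {p : X → Prop} [DecidablePred p]
    (A : Finset (Subtype p)) : (A.image Subtype.val).subtype p = A := by
  ext a; simp [a.2]

theorem subtype_empty {X : Type*} (p : X → Prop) [DecidablePred p] :
    (∅ : Finset X).subtype p = ∅ := by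
  ext a; simp

end Finset

namespace Diversity

variable {X : Type*}

section

variable (D : Diversity X)

@[simp]
theorem restrict_δ (S : Set X) (A : Finset S) : (D.restrict S).δ A = D.δ (A.image Subtype.val) :=
  rfl

theorem δ_empty : D.δ ∅ = 0 := (D.eq_zero_iff ∅).2 (by simp)

theorem δ_singleton (x : X) : D.δ {x} = 0 := (D.eq_zero_iff {x}).2 (by simp)

theorem δ_union_le {W : Finset X} (U V : Finset X) (hW : W.Nonempty) :
    D.δ (U ∪ V) ≤ D.δ (U ∪ W) + D.δ (V ∪ W) := by
  simpa only [union_comm W V] using D.triangle U W V hW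

theorem δ_union_le_of_mem {T : Finset X} {c : X} (hc : c ∈ T) (U : Finset X) :
    D.δ (T ∪ U) ≤ D.δ T + D.δ (insert c U) := by
  simpa [← insert_eq, insert_eq_of_mem hc] using D.triangle T {c} U (singleton_nonempty c)

theorem δ_le_insert (U : Finset X) (e : X) : D.δ U ≤ D.δ (insert e U) := by
  simpa [D.δ_singleton, ← insert_eq, union_comm] using D.triangle U {e} ∅ (singleton_nonempty e)

theorem δ_mono {A B : Finset X} (h : A ⊆ B) : D.δ A ≤ D.δ B :=
  le_of_subset_of_forall_le_insert (fun U _ e _ => D.δ_le_insert U e) h subset_rfl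

theorem abs_δ_insert_sub_le (T : Finset X) (x y : X) :
    |D.δ (insert x T) - D.δ (insert y T)| ≤ D.δ {x, y} := by
  have h (x y : X) : D.δ (insert x T) ≤ D.δ (insert y T) + D.δ {x, y} := by
    simpa [← insert_eq, union_comm, pair_comm] using D.triangle T {y} {x} (singleton_nonempty y)
  rw [abs_sub_le_iff]
  constructor
  · linarith [h x y]
  · linarith [h y x, congrArg D.δ (pair_comm x y)]

noncomputable abbrev toPseudoMetricSpace : PseudoMetricSpace X where
  dist a b := D.δ {a, b}
  dist_self a := by simp [D.δ_singleton]
  dist_comm a b := by rw [pair_comm]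
  dist_triangle a b c := by
    simpa [← insert_eq] using D.triangle {a} {b} {c} (singleton_nonempty b)

end

section

variable (D : Diversity X)

/-- Stands in for `IsAdmissible (D.restrict G)`, with functions on `Finset X` in place of
functions on `Finset ↥G`; the values off `G` play no role. -/
structure AdmissibleOn (G : Finset X) (f : Finset X → ℝ) : Prop where
  empty : f ∅ = 0
  le : ∀ A ⊆ G, D.δ A ≤ f A
  tri : ∀ A ⊆ G, ∀ B ⊆ G, ∀ C ⊆ G, C.Nonempty → f (A ∪ B) ≤ f (A ∪ C) + D.δ (B ∪ C)
  subadd : ∀ A ⊆ G, ∀ B ⊆ G, f (A ∪ B) ≤ f A + f B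

variable {D}

namespace AdmissibleOn

variable {G : Finset X} {f : Finset X → ℝ}

theorem nonneg (hf : D.AdmissibleOn G f) {A : Finset X} (hA : A ⊆ G) : 0 ≤ f A :=
  (D.nonneg A).trans (hf.le A hA)

theorem mono (hf : D.AdmissibleOn G f) {A B : Finset X} (hAB : A ⊆ B) (hB : B ⊆ G) :
    f A ≤ f B := by
  refine le_of_subset_of_forall_le_insert (fun U hU e he => ?_) hAB hB
  simpa [D.δ_singleton, ← insert_eq, union_comm] using
    hf.tri U hU ∅ (empty_subset G) {e} (singleton_subset_iff.2 he) (singleton_nonempty e)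

theorem isAdmissible_restrict (hf : D.AdmissibleOn G f) :
    IsAdmissible (D.restrict G) (fun A => f (A.image Subtype.val)) := by
  have hG (A : Finset ↥(G : Set X)) : A.image Subtype.val ⊆ G := fun a ha => by
    obtain ⟨b, -, rfl⟩ := mem_image.1 ha
    exact b.2
  refine ⟨by simpa using hf.empty, fun A => hf.le _ (hG A), fun A B C hC => ?_, fun A B => ?_⟩
  · simpa [image_union] using hf.tri _ (hG A) _ (hG B) _ (hG C) (hC.image _)
  · simpa only [image_union] using hf.subadd _ (hG A) _ (hG B)

end AdmissibleOn

theorem _root_.IsAdmissible.admissibleOn {f : Finset X → ℝ} (hf : IsAdmissible D f) (G : Finset X) :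
    D.AdmissibleOn G f :=
  ⟨hf.empty, fun A _ => hf.le A, fun A _ B _ C _ => hf.tri A B C, fun A _ B _ => hf.subadd A B⟩

theorem _root_.IsAdmissible.restrict {f : Finset X → ℝ} (hf : IsAdmissible D f) (S : Set X) :
    IsAdmissible (D.restrict S) (fun A => f (A.image Subtype.val)) :=
  ⟨by simpa using hf.empty, fun A => hf.le _, fun A B C hC => by
    simpa [image_union] using hf.tri _ _ _ (hC.image _), fun A B => by
    simpa only [image_union] using hf.subadd _ _⟩

theorem _root_.IsAdmissible.admissibleOn_subtype {F : Finset X} {g : Finset ↥(F : Set X) → ℝ}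
    (hg : IsAdmissible (D.restrict F) g) :
    D.AdmissibleOn F (fun A => g (A.subtype (· ∈ (F : Set X)))) := by
  have hδ {A : Finset X} (hA : A ⊆ F) : D.δ A = (D.restrict F).δ (A.subtype (· ∈ (F : Set X))) := by
    rw [restrict_δ, image_val_subtype (p := (· ∈ (F : Set X))) fun a ha => hA ha]
  refine ⟨by simpa [subtype_empty] using hg.empty, fun A hA => hδ hA ▸ hg.le _,
    fun A hA B hB C hC hCne => ?_, fun A _ B _ => ?_⟩
  · rw [hδ (union_subset hB hC)]
    obtain ⟨c, hc⟩ := hCne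
    convert hg.tri (A.subtype _) (B.subtype _) (C.subtype _) ⟨⟨c, hC hc⟩, mem_subtype.2 hc⟩
      using 3 <;> ext <;> simp
  · convert hg.subadd (A.subtype _) (B.subtype _) using 2; ext; simp

end

section

variable (D : Diversity X)

theorem forall_isAdmissible_restrict_iff (r : ℝ → ℝ → Prop) :
    (∀ (F : Finset X) (g : Finset ↥(F : Set X) → ℝ), IsAdmissible (D.restrict F) g →
      ∃ x, ∀ A : Finset ↥(F : Set X), r (D.δ (insert x (A.image Subtype.val))) (g A)) ↔
    ∀ (G : Finset X) (f : Finset X → ℝ), D.AdmissibleOn G f →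
      ∃ x, ∀ A ⊆ G, r (D.δ (insert x A)) (f A) := by
  constructor
  · intro h G f hf
    obtain ⟨x, hx⟩ := h G _ hf.isAdmissible_restrict
    refine ⟨x, fun A hA => ?_⟩
    simpa only [image_val_subtype (p := (· ∈ (G : Set X))) fun a ha => hA ha] using
      hx (A.subtype _)
  · intro h F g hg
    obtain ⟨x, hx⟩ := h F _ hg.admissibleOn_subtype
    refine ⟨x, fun A => ?_⟩
    simpa only [subtype_image_val] using hx (A.image Subtype.val) fun a ha => by
      obtain ⟨b, -, rfl⟩ := mem_image.1 ha
      exact b.2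

theorem extensionProp_iff :
    D.ExtensionProp ↔ ∀ (G : Finset X) (f : Finset X → ℝ), D.AdmissibleOn G f →
      ∃ x, ∀ A ⊆ G, D.δ (insert x A) = f A :=
  D.forall_isAdmissible_restrict_iff (· = ·)

theorem approxExtensionProp_iff :
    D.ApproxExtensionProp ↔ ∀ (G : Finset X) (f : Finset X → ℝ), D.AdmissibleOn G f →
      ∀ ε : ℝ, 0 < ε → ∃ x, ∀ A ⊆ G, |D.δ (insert x A) - f A| ≤ ε := by
  constructor
  · intro h G f hf ε hε
    exact (D.forall_isAdmissible_restrict_iff (|· - ·| ≤ ε)).1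
      (fun F g hg => h F g hg ε hε) G f hf
  · intro h F g hg ε hε
    exact (D.forall_isAdmissible_restrict_iff (|· - ·| ≤ ε)).2
      (fun G f hf => h G f hf ε hε) F g hg

variable {D}

theorem ExtensionProp.nonempty (h : D.ExtensionProp) : Nonempty X := by
  have hadm : D.AdmissibleOn ∅ (fun _ => 0) :=
    ⟨rfl, fun A hA => by simp [subset_empty.1 hA, D.δ_empty],
      fun _ _ _ _ C hC hCne => absurd (subset_empty.1 hC) hCne.ne_empty, by simp⟩
  obtain ⟨x, -⟩ := D.extensionProp_iff.1 h ∅ _ hadm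
  exact ⟨x⟩

theorem ExtensionProp.exists_mem_forall_δ_insert_eq {S : Set X}
    (hS : (D.restrict S).ExtensionProp) {f : Finset X → ℝ} (hf : IsAdmissible D f)
    {T : Finset X} (hT : ↑T ⊆ S) : ∃ x ∈ S, ∀ A ⊆ T, D.δ (insert x A) = f A := by
  obtain ⟨x, hx⟩ := (D.restrict S).extensionProp_iff.1 hS (T.subtype (· ∈ S)) _
    ((hf.restrict S).admissibleOn _)
  refine ⟨x, x.2, fun A hA => ?_⟩
  have hAS : (A.subtype (· ∈ S)).image Subtype.val = A :=
    image_val_subtype fun a ha => hT (hA ha)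
  simpa [image_insert, hAS] using hx (A.subtype (· ∈ S)) (subtype_mono hA)

end

section

variable (D : Diversity X)

/-- Costs of covering `A` by stars `(b, Aᵦ)` centred in `B ⊆ G`. Their infimum `maxExt` is the
paper's canonical extension `f_G^X`: repeated centres and covers overshooting `A` do not change
the infimum, but make covers easy to merge and to modify. -/
def coverCosts (G : Finset X) (f : Finset X → ℝ) (A : Finset X) : Set ℝ :=
  {r | ∃ B ⊆ G, ∃ P : Multiset (X × Finset X), (∀ p ∈ P, p.1 ∈ B) ∧
    (∀ a ∈ A, ∃ p ∈ P, a ∈ p.2) ∧ r = f B + (P.map fun p => D.δ (insert p.1 p.2)).sum}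

noncomputable def maxExt (G : Finset X) (f : Finset X → ℝ) (A : Finset X) : ℝ :=
  sInf (D.coverCosts G f A)

theorem le_add_sum_of_cover {g : Finset X → ℝ} {G : Finset X}
    (htri : ∀ U ⊆ G, ∀ V ⊆ G, ∀ W ⊆ G, W.Nonempty → g (U ∪ V) ≤ g (U ∪ W) + D.δ (V ∪ W))
    (P : Multiset (X × Finset X)) {C A : Finset X} (hC : C ⊆ G) (hA : A ⊆ G)
    (hP : ∀ p ∈ P, p.1 ∈ C) (hcov : ∀ a ∈ A, ∃ p ∈ P, a ∈ p.2) :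
    g (C ∪ A) ≤ g C + (P.map fun p => D.δ (insert p.1 p.2)).sum := by
  induction P using Multiset.induction_on generalizing A with
  | empty =>
    have : A = ∅ := eq_empty_of_forall_notMem fun a ha => by simpa using hcov a ha
    simp [this]
  | cons p P ih =>
    have hpC : p.1 ∈ C := hP p (Multiset.mem_cons_self _ _)
    have hstar := htri (C ∪ A \ p.2) (union_subset hC (sdiff_subset.trans hA)) (A ∩ p.2)
      (inter_subset_left.trans hA) {p.1} (singleton_subset_iff.2 (hC hpC)) (singleton_nonempty _)
    have hrest := ih (A := A \ p.2) (sdiff_subset.trans hA)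
      (fun q hq => hP q (Multiset.mem_cons_of_mem hq)) fun a ha => by
        obtain ⟨q, hq, haq⟩ := hcov a (mem_sdiff.1 ha).1
        rcases Multiset.mem_cons.1 hq with rfl | hq
        · exact absurd haq (mem_sdiff.1 ha).2
        · exact ⟨q, hq, haq⟩
    have hδ : D.δ (A ∩ p.2 ∪ {p.1}) ≤ D.δ (insert p.1 p.2) :=
      D.δ_mono fun x => by simp only [mem_union, mem_inter, mem_singleton, mem_insert]; tauto
    rw [union_assoc, sdiff_union_inter,
      union_eq_left.2 (singleton_subset_iff.2 (mem_union_left _ hpC))] at hstar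
    simp only [Multiset.map_cons, Multiset.sum_cons]
    linarith

variable {D} {G : Finset X} {f : Finset X → ℝ}

theorem δ_le_of_mem_coverCosts (hf : D.AdmissibleOn G f) {A : Finset X} {r : ℝ}
    (hr : r ∈ D.coverCosts G f A) : D.δ A ≤ r := by
  obtain ⟨B, hB, P, hPB, hcov, rfl⟩ := hr
  have := D.le_add_sum_of_cover (G := B ∪ A) (fun U _ V _ W _ hW => D.δ_union_le U V hW) P
    subset_union_left subset_union_right hPB hcov
  linarith [D.δ_mono (subset_union_right (s₁ := B) (s₂ := A)), hf.le B hB]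

theorem coverCosts_nonempty (hG : G.Nonempty) (A : Finset X) : (D.coverCosts G f A).Nonempty :=
  let ⟨b, hb⟩ := hG
  ⟨_, {b}, singleton_subset_iff.2 hb, {(b, A)}, by simp, fun a ha => ⟨(b, A), by simp, ha⟩, rfl⟩

theorem maxExt_le (hf : D.AdmissibleOn G f) {A : Finset X} {r : ℝ}
    (hr : r ∈ D.coverCosts G f A) : D.maxExt G f A ≤ r :=
  csInf_le ⟨D.δ A, fun _ hr => δ_le_of_mem_coverCosts hf hr⟩ hr

theorem le_maxExt_add (hG : G.Nonempty) {A : Finset X} {x c : ℝ}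
    (h : ∀ r ∈ D.coverCosts G f A, x ≤ r + c) : x ≤ D.maxExt G f A + c := by
  have := le_csInf (coverCosts_nonempty hG A) fun r hr => sub_le_iff_le_add.2 (h r hr)
  rw [maxExt]
  linarith

theorem maxExt_eq (hf : D.AdmissibleOn G f) {A : Finset X} (hA : A ⊆ G) :
    D.maxExt G f A = f A := by
  have hmem : f A ∈ D.coverCosts G f A :=
    ⟨A, hA, A.val.map fun a => (a, {a}), by simp, fun a ha => ⟨(a, {a}), by simpa using ha,
      mem_singleton_self a⟩, by simp [D.δ_singleton]⟩
  refine le_antisymm (maxExt_le hf hmem) (le_csInf ⟨_, hmem⟩ ?_)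
  rintro _ ⟨B, hB, P, hPB, hcov, rfl⟩
  linarith [hf.mono (subset_union_right (s₁ := B)) (union_subset hB hA),
    D.le_add_sum_of_cover hf.tri P hB hA hPB hcov]

theorem δ_le_maxExt (hf : D.AdmissibleOn G f) (hG : G.Nonempty) (A : Finset X) :
    D.δ A ≤ D.maxExt G f A := by
  simpa using le_maxExt_add (c := 0) hG fun r hr => by simpa using δ_le_of_mem_coverCosts hf hr

theorem maxExt_tri (hf : D.AdmissibleOn G f) (hG : G.Nonempty) (A B C : Finset X)
    (hC : C.Nonempty) : D.maxExt G f (A ∪ B) ≤ D.maxExt G f (A ∪ C) + D.δ (B ∪ C) := by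
  apply le_maxExt_add hG
  rintro _ ⟨B', hB', P, hPB, hcov, rfl⟩
  obtain ⟨c, hc⟩ := hC
  obtain ⟨p, hp, hcp⟩ := hcov c (mem_union_right _ hc)
  obtain ⟨Q, rfl⟩ := Multiset.exists_cons_of_mem hp
  -- enlarge the star through `c` by `B`, paying `δ (B ∪ C)` by the triangle inequality at `c`
  have hstar : D.δ (insert p.1 (p.2 ∪ B)) ≤ D.δ (insert p.1 p.2) + D.δ (B ∪ C) := by
    calc D.δ (insert p.1 (p.2 ∪ B)) = D.δ (insert p.1 p.2 ∪ B) := by rw [insert_union]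
      _ ≤ D.δ (insert p.1 p.2) + D.δ (insert c B) :=
        D.δ_union_le_of_mem (mem_insert_of_mem hcp) B
      _ ≤ D.δ (insert p.1 p.2) + D.δ (B ∪ C) := by
        gcongr
        exact D.δ_mono (insert_subset (mem_union_right _ hc) subset_union_left)
  have hmem : f B' + (((p.1, p.2 ∪ B) ::ₘ Q).map fun p => D.δ (insert p.1 p.2)).sum ∈
      D.coverCosts G f (A ∪ B) := by
    refine ⟨B', hB', _, fun q hq => ?_, fun a ha => ?_, rfl⟩
    · rcases Multiset.mem_cons.1 hq with rfl | hq
      · exact hPB p (Multiset.mem_cons_self _ _)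
      · exact hPB q (Multiset.mem_cons_of_mem hq)
    · rcases mem_union.1 ha with ha | ha
      · obtain ⟨q, hq, haq⟩ := hcov a (mem_union_left _ ha)
        rcases Multiset.mem_cons.1 hq with rfl | hq
        · exact ⟨_, Multiset.mem_cons_self _ _, mem_union_left _ haq⟩
        · exact ⟨q, Multiset.mem_cons_of_mem hq, haq⟩
      · exact ⟨_, Multiset.mem_cons_self _ _, mem_union_right _ ha⟩
  have := maxExt_le hf hmem
  simp only [Multiset.map_cons, Multiset.sum_cons] at this ⊢
  linarith

theorem maxExt_subadd (hf : D.AdmissibleOn G f) (hG : G.Nonempty) (A B : Finset X) :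
    D.maxExt G f (A ∪ B) ≤ D.maxExt G f A + D.maxExt G f B := by
  apply le_maxExt_add hG
  rintro _ ⟨B₁, hB₁, P₁, hP₁, hcov₁, rfl⟩
  rw [add_comm]
  apply le_maxExt_add hG
  rintro _ ⟨B₂, hB₂, P₂, hP₂, hcov₂, rfl⟩
  have hmem : f (B₁ ∪ B₂) + ((P₁ + P₂).map fun p => D.δ (insert p.1 p.2)).sum ∈
      D.coverCosts G f (A ∪ B) := by
    refine ⟨B₁ ∪ B₂, union_subset hB₁ hB₂, P₁ + P₂, fun p hp => ?_, fun a ha => ?_, rfl⟩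
    · rcases Multiset.mem_add.1 hp with hp | hp
      · exact mem_union_left _ (hP₁ p hp)
      · exact mem_union_right _ (hP₂ p hp)
    · rcases mem_union.1 ha with ha | ha
      · obtain ⟨p, hp, hap⟩ := hcov₁ a ha
        exact ⟨p, Multiset.mem_add.2 (Or.inl hp), hap⟩
      · obtain ⟨p, hp, hap⟩ := hcov₂ a ha
        exact ⟨p, Multiset.mem_add.2 (Or.inr hp), hap⟩
  have := maxExt_le hf hmem
  rw [Multiset.map_add, Multiset.sum_add] at this
  linarith [hf.subadd B₁ hB₁ B₂ hB₂]

theorem AdmissibleOn.isAdmissible_maxExt (hf : D.AdmissibleOn G f) (hG : G.Nonempty) :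
    IsAdmissible D (D.maxExt G f) :=
  ⟨by rw [maxExt_eq hf (empty_subset G), hf.empty], δ_le_maxExt hf hG,
    fun A B C hC => maxExt_tri hf hG A B C hC, maxExt_subadd hf hG⟩

end

section

variable (D : Diversity X)

/-- Picture a point `p` realising `f` on `G`. For `E ⊆ G` the triangle inequalities
`δ (z ∪ E ∪ B) ≤ δ (p ∪ z ∪ E) + δ (p ∪ B)` and `δ (p ∪ E ∪ B) ≤ δ (p ∪ z ∪ E) + δ (z ∪ B)`,
`B ⊆ G`, bound `δ (p ∪ z ∪ E)` from below; the amalgam gives it the least such value. -/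
noncomputable def amalgamValue (G : Finset X) (f : Finset X → ℝ) (z : X) (E : Finset X) : ℝ :=
  G.powerset.sup' ⟨∅, empty_mem_powerset G⟩ fun B =>
    max (D.δ (insert z (E ∪ B)) - f B) (f (E ∪ B) - D.δ (insert z B))

noncomputable def amalgam (G : Finset X) (f : Finset X → ℝ) (z : X) (A : Finset X) : ℝ :=
  if z ∈ A then D.amalgamValue G f z (A.erase z) else f A

variable {G : Finset X} (f : Finset X → ℝ) (z : X)

theorem sub_le_amalgamValue_left {B : Finset X} (hB : B ⊆ G) (E : Finset X) :
    D.δ (insert z (E ∪ B)) - f B ≤ D.amalgamValue G f z E :=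
  (le_max_left _ _).trans <| le_sup' (fun B => max (D.δ (insert z (E ∪ B)) - f B)
    (f (E ∪ B) - D.δ (insert z B))) (mem_powerset.2 hB)

theorem sub_le_amalgamValue_right {B : Finset X} (hB : B ⊆ G) (E : Finset X) :
    f (E ∪ B) - D.δ (insert z B) ≤ D.amalgamValue G f z E :=
  (le_max_right _ _).trans <| le_sup' (fun B => max (D.δ (insert z (E ∪ B)) - f B)
    (f (E ∪ B) - D.δ (insert z B))) (mem_powerset.2 hB)

variable {D f z}

theorem amalgamValue_le {E : Finset X} {x : ℝ}
    (h₁ : ∀ B ⊆ G, D.δ (insert z (E ∪ B)) - f B ≤ x)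
    (h₂ : ∀ B ⊆ G, f (E ∪ B) - D.δ (insert z B) ≤ x) : D.amalgamValue G f z E ≤ x :=
  sup'_le _ _ fun B hB => max_le (h₁ B (mem_powerset.1 hB)) (h₂ B (mem_powerset.1 hB))

theorem δ_insert_le_amalgamValue (hf : D.AdmissibleOn G f) (E : Finset X) :
    D.δ (insert z E) ≤ D.amalgamValue G f z E := by
  simpa [hf.empty] using D.sub_le_amalgamValue_left f z (empty_subset G) E

theorem le_amalgamValue (E : Finset X) :
    f E ≤ D.amalgamValue G f z E := by
  simpa [D.δ_singleton] using D.sub_le_amalgamValue_right f z (empty_subset G) E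

theorem amalgamValue_empty_le {ε : ℝ} (happ : ∀ A ⊆ G, |D.δ (insert z A) - f A| ≤ ε) :
    D.amalgamValue G f z ∅ ≤ ε :=
  amalgamValue_le (fun B hB => by simpa using (abs_le.1 (happ B hB)).2)
    (fun B hB => by rw [empty_union]; linarith [(abs_le.1 (happ B hB)).1])

variable {E Q V W : Finset X}

theorem amalgamValue_union_le_add (hf : D.AdmissibleOn G f) (hE : E ⊆ G) (hQ : Q ⊆ G) :
    D.amalgamValue G f z (E ∪ Q) ≤ D.amalgamValue G f z E + f Q := by
  refine amalgamValue_le (fun B hB => ?_) (fun B hB => ?_)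
  · have := D.sub_le_amalgamValue_left f z (union_subset hQ hB) E
    rw [← union_assoc] at this
    linarith [hf.subadd Q hQ B hB]
  · have := hf.subadd (E ∪ B) (union_subset hE hB) Q hQ
    rw [union_right_comm] at this
    linarith [D.sub_le_amalgamValue_right f z hB E]

theorem amalgamValue_union_le_add_amalgamValue (hf : D.AdmissibleOn G f) (hQ : Q ⊆ G) :
    D.amalgamValue G f z (E ∪ Q) ≤ D.amalgamValue G f z E + D.amalgamValue G f z Q := by
  refine amalgamValue_le (fun B hB => ?_) (fun B hB => ?_)
  · have := D.δ_union_le_of_mem (mem_insert_self z E) (Q ∪ B)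
    rw [insert_union, ← union_assoc] at this
    linarith [δ_insert_le_amalgamValue (z := z) hf E, D.sub_le_amalgamValue_left f z hB Q]
  · have := D.δ_union_le_of_mem (mem_insert_self z Q) B
    rw [insert_union] at this
    have h := D.sub_le_amalgamValue_right f z (union_subset hQ hB) E
    rw [← union_assoc] at h
    linarith [δ_insert_le_amalgamValue (z := z) hf Q]

theorem amalgamValue_union_le_of_nonempty (hf : D.AdmissibleOn G f) (hE : E ⊆ G) (hV : V ⊆ G)
    (hW : W ⊆ G) (hWne : W.Nonempty) :
    D.amalgamValue G f z (E ∪ V) ≤ D.amalgamValue G f z (E ∪ W) + D.δ (V ∪ W) := by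
  refine amalgamValue_le (fun B hB => ?_) (fun B hB => ?_)
  · have := D.δ_union_le (insert z (E ∪ B)) V hWne
    rw [insert_union, insert_union, union_right_comm, union_right_comm E B W] at this
    linarith [D.sub_le_amalgamValue_left f z hB (E ∪ W)]
  · have := hf.tri (E ∪ B) (union_subset hE hB) V hV W hW hWne
    rw [union_right_comm, union_right_comm E B W] at this
    linarith [D.sub_le_amalgamValue_right f z hB (E ∪ W)]

theorem amalgamValue_union_le_insert (hf : D.AdmissibleOn G f) (hE : E ⊆ G) (hV : V ⊆ G)
    (hW : W ⊆ G) :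
    D.amalgamValue G f z (E ∪ V) ≤ D.amalgamValue G f z (E ∪ W) + D.δ (insert z (V ∪ W)) := by
  have hzV : D.δ (insert z V) ≤ D.δ (insert z (V ∪ W)) :=
    D.δ_mono (insert_subset_insert z subset_union_left)
  refine amalgamValue_le (fun B hB => ?_) (fun B hB => ?_)
  · have h₁ := D.δ_union_le_of_mem (mem_insert_self z (E ∪ W ∪ B)) V
    have h₂ : D.δ (insert z (E ∪ V ∪ B)) ≤ D.δ (insert z (E ∪ W ∪ B) ∪ V) :=
      D.δ_mono fun x => by simp only [mem_insert, mem_union]; tauto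
    linarith [D.sub_le_amalgamValue_left f z hB (E ∪ W)]
  · have h₁ := D.δ_union_le_of_mem (mem_insert_self z V) B
    have h₂ := D.sub_le_amalgamValue_right f z (union_subset hV hB) (E ∪ W)
    have h₃ : f (E ∪ V ∪ B) ≤ f (E ∪ W ∪ (V ∪ B)) :=
      hf.mono (fun x => by simp only [mem_union]; tauto)
        (union_subset (union_subset hE hW) (union_subset hV hB))
    rw [insert_union] at h₁
    linarith

theorem amalgamValue_union_le_add_δ (hf : D.AdmissibleOn G f) (hE : E ⊆ G) (hV : V ⊆ G)
    (hW : W ⊆ G) (hWne : W.Nonempty) :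
    D.amalgamValue G f z (E ∪ V) ≤ f (E ∪ W) + D.δ (insert z (V ∪ W)) := by
  refine amalgamValue_le (fun B hB => ?_) (fun B hB => ?_)
  · have h₁ := D.δ_union_le (E ∪ B) (insert z V) hWne
    have h₂ := hf.le _ (union_subset (union_subset hE hW) hB)
    have h₃ := hf.subadd (E ∪ W) (union_subset hE hW) B hB
    rw [union_insert, union_right_comm E B V, union_right_comm E B W, insert_union] at h₁
    linarith
  · have h₁ := hf.tri E hE (V ∪ B) (union_subset hV hB) W hW hWne
    have h₂ := D.δ_union_le_of_mem (mem_insert_self z (V ∪ W)) B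
    have h₃ : D.δ (V ∪ B ∪ W) ≤ D.δ (insert z (V ∪ W) ∪ B) :=
      D.δ_mono fun x => by simp only [mem_insert, mem_union]; tauto
    rw [← union_assoc] at h₁
    linarith

end

section

variable {D : Diversity X} {G : Finset X} {f : Finset X → ℝ} {z : X}

theorem amalgam_of_mem {A : Finset X} (h : z ∈ A) :
    D.amalgam G f z A = D.amalgamValue G f z (A.erase z) := if_pos h

theorem amalgam_of_notMem {A : Finset X} (h : z ∉ A) : D.amalgam G f z A = f A := if_neg h

theorem amalgam_tri (hf : D.AdmissibleOn G f) {A B C : Finset X} (hA : A ⊆ insert z G)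
    (hB : B ⊆ insert z G) (hC : C ⊆ insert z G) (hCne : C.Nonempty) :
    D.amalgam G f z (A ∪ B) ≤ D.amalgam G f z (A ∪ C) + D.δ (B ∪ C) := by
  have hA₀ := subset_insert_iff.1 hA
  have hB₀ := subset_insert_iff.1 hB
  have hC₀ := subset_insert_iff.1 hC
  by_cases hAB : z ∈ A ∪ B <;> by_cases hAC : z ∈ A ∪ C
  · rw [amalgam_of_mem hAB, amalgam_of_mem hAC, erase_union_distrib, erase_union_distrib]
    by_cases hBC : z ∈ B ∪ C
    · simpa [← erase_union_distrib, insert_erase hBC] using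
        amalgamValue_union_le_insert (z := z) hf hA₀ hB₀ hC₀
    · obtain ⟨hzB, hzC⟩ := not_or.1 (mem_union.not.1 hBC)
      rw [erase_eq_of_notMem hzB, erase_eq_of_notMem hzC]
      exact amalgamValue_union_le_of_nonempty hf hA₀ ((subset_insert_iff_of_notMem hzB).1 hB)
        ((subset_insert_iff_of_notMem hzC).1 hC) hCne
  · obtain ⟨hzA, hzC⟩ := not_or.1 (mem_union.not.1 hAC)
    have hzB : z ∈ B := (mem_union.1 hAB).resolve_left hzA
    rw [amalgam_of_mem hAB, amalgam_of_notMem hAC, erase_union_distrib, erase_eq_of_notMem hzA]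
    simpa [← insert_union, insert_erase hzB] using
      amalgamValue_union_le_add_δ (z := z) hf ((subset_insert_iff_of_notMem hzA).1 hA) hB₀
        ((subset_insert_iff_of_notMem hzC).1 hC) hCne
  · obtain ⟨hzA, hzB⟩ := not_or.1 (mem_union.not.1 hAB)
    have hzC : z ∈ C := (mem_union.1 hAC).resolve_left hzA
    have hA' := (subset_insert_iff_of_notMem hzA).1 hA
    have hB' := (subset_insert_iff_of_notMem hzB).1 hB
    rw [amalgam_of_notMem hAB, amalgam_of_mem hAC, erase_union_distrib, erase_eq_of_notMem hzA]
    have h₁ : f (A ∪ B) ≤ D.amalgamValue G f z (A ∪ B) := le_amalgamValue _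
    have h₂ := amalgamValue_union_le_insert (z := z) hf hA' hB' hC₀
    rw [← union_insert, insert_erase hzC] at h₂
    linarith
  · obtain ⟨hzA, hzB⟩ := not_or.1 (mem_union.not.1 hAB)
    have hzC : z ∉ C := fun h => hAC (mem_union_right _ h)
    rw [amalgam_of_notMem hAB, amalgam_of_notMem hAC]
    exact hf.tri A ((subset_insert_iff_of_notMem hzA).1 hA) B
      ((subset_insert_iff_of_notMem hzB).1 hB) C ((subset_insert_iff_of_notMem hzC).1 hC) hCne

theorem amalgam_subadd (hf : D.AdmissibleOn G f) {A B : Finset X} (hA : A ⊆ insert z G)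
    (hB : B ⊆ insert z G) : D.amalgam G f z (A ∪ B) ≤ D.amalgam G f z A + D.amalgam G f z B := by
  by_cases hzA : z ∈ A <;> by_cases hzB : z ∈ B
  · rw [amalgam_of_mem (mem_union_left _ hzA), amalgam_of_mem hzA, amalgam_of_mem hzB,
      erase_union_distrib]
    exact amalgamValue_union_le_add_amalgamValue hf (subset_insert_iff.1 hB)
  · rw [amalgam_of_mem (mem_union_left _ hzA), amalgam_of_mem hzA, amalgam_of_notMem hzB,
      erase_union_distrib, erase_eq_of_notMem hzB]
    exact amalgamValue_union_le_add hf (subset_insert_iff.1 hA)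
      ((subset_insert_iff_of_notMem hzB).1 hB)
  · rw [amalgam_of_mem (mem_union_right _ hzB), amalgam_of_notMem hzA, amalgam_of_mem hzB,
      erase_union_distrib, erase_eq_of_notMem hzA, union_comm, add_comm]
    exact amalgamValue_union_le_add hf (subset_insert_iff.1 hB)
      ((subset_insert_iff_of_notMem hzA).1 hA)
  · rw [amalgam_of_notMem (by simp [hzA, hzB]), amalgam_of_notMem hzA, amalgam_of_notMem hzB]
    exact hf.subadd A ((subset_insert_iff_of_notMem hzA).1 hA) B
      ((subset_insert_iff_of_notMem hzB).1 hB)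

theorem AdmissibleOn.amalgam (hf : D.AdmissibleOn G f) (z : X) :
    D.AdmissibleOn (insert z G) (D.amalgam G f z) := by
  refine ⟨by rw [amalgam_of_notMem (notMem_empty z), hf.empty], fun A hA => ?_,
    fun A hA B hB C hC hCne => amalgam_tri hf hA hB hC hCne,
    fun A hA B hB => amalgam_subadd hf hA hB⟩
  by_cases hz : z ∈ A
  · rw [amalgam_of_mem hz]
    simpa [insert_erase hz] using δ_insert_le_amalgamValue (z := z) hf (A.erase z)
  · rw [amalgam_of_notMem hz]
    exact hf.le A ((subset_insert_iff_of_notMem hz).1 hA)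

theorem AdmissibleOn.exists_admissibleOn_insert (hf : D.AdmissibleOn G f) {ε : ℝ}
    (happ : ∀ A ⊆ G, |D.δ (insert z A) - f A| ≤ ε) :
    ∃ f' : Finset X → ℝ, D.AdmissibleOn (insert z G) f' ∧ (∀ A ⊆ G, f' A = f A) ∧ f' {z} ≤ ε := by
  by_cases hz : z ∈ G
  · refine ⟨f, by rwa [insert_eq_of_mem hz], fun _ _ => rfl, ?_⟩
    have := happ {z} (singleton_subset_iff.2 hz)
    rw [insert_eq_of_mem (mem_singleton_self z), D.δ_singleton] at this
    linarith [(abs_le.1 this).1]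
  · refine ⟨D.amalgam G f z, hf.amalgam z, fun A hA => amalgam_of_notMem fun h => hz (hA h), ?_⟩
    rw [amalgam_of_mem (mem_singleton_self z), erase_singleton]
    exact amalgamValue_empty_le happ

end

section

variable {D : Diversity X}

theorem _root_.IsAdmissible.abs_sub_insert_le {f : Finset X → ℝ} (hf : IsAdmissible D f)
    (T : Finset X) (x y : X) : |f (insert x T) - f (insert y T)| ≤ D.δ {x, y} := by
  have h (x y : X) : f (insert x T) ≤ f (insert y T) + D.δ {x, y} := by
    simpa [← insert_eq, union_comm] using hf.tri T {x} {y} (singleton_nonempty y)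
  rw [abs_sub_le_iff]
  constructor
  · linarith [h x y]
  · linarith [h y x, congrArg D.δ (pair_comm x y)]

theorem abs_sub_image_le_sum {g : Finset X → ℝ}
    (hg : ∀ T x y, |g (insert x T) - g (insert y T)| ≤ D.δ {x, y}) (φ : X → X) (A : Finset X) :
    ∀ C, |g (C ∪ A.image φ) - g (C ∪ A)| ≤ ∑ a ∈ A, D.δ {a, φ a} := by
  induction A using Finset.induction_on with
  | empty => simp
  | insert a A ha ih =>
    intro C
    rw [image_insert, union_insert, union_insert, sum_insert ha, ← insert_union, ← insert_union]
    calc |g (insert (φ a) C ∪ A.image φ) - g (insert a C ∪ A)|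
        ≤ |g (insert (φ a) C ∪ A.image φ) - g (insert (φ a) C ∪ A)|
          + |g (insert (φ a) C ∪ A) - g (insert a C ∪ A)| := abs_sub_le _ _ _
      _ ≤ ∑ a ∈ A, D.δ {a, φ a} + D.δ {φ a, a} := by
        gcongr
        · exact ih _
        · simpa only [insert_union] using hg (C ∪ A) (φ a) a
      _ = D.δ {a, φ a} + ∑ a ∈ A, D.δ {a, φ a} := by rw [add_comm, pair_comm]

theorem approxExtensionProp_of_dense {S : Set X}
    (hdense : ∀ x : X, ∀ ε : ℝ, 0 < ε → ∃ y ∈ S, D.δ {x, y} < ε)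
    (hS : (D.restrict S).ExtensionProp) : D.ApproxExtensionProp := by
  rw [approxExtensionProp_iff]
  intro G f hf ε hε
  rcases G.eq_empty_or_nonempty with rfl | hG
  · obtain ⟨⟨x, -⟩⟩ := hS.nonempty
    exact ⟨x, fun A hA => by simp [subset_empty.1 hA, D.δ_singleton, hf.empty, hε.le]⟩
  have hG₀ : (0 : ℝ) < #G := by exact_mod_cast hG.card_pos
  choose φ hφS hφ using fun a => hdense a (ε / (2 * #G)) (by positivity)
  have hf' := hf.isAdmissible_maxExt hG
  obtain ⟨x, -, hx⟩ := hS.exists_mem_forall_δ_insert_eq hf' (T := G.image φ) fun y hy => by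
    obtain ⟨a, -, rfl⟩ := mem_image.1 (mem_coe.1 hy)
    exact hφS a
  refine ⟨x, fun A hA => ?_⟩
  have hsum : ∑ a ∈ A, D.δ {a, φ a} ≤ ε / 2 := by
    calc ∑ a ∈ A, D.δ {a, φ a} ≤ #A • (ε / (2 * #G)) :=
          sum_le_card_nsmul _ _ _ fun a _ => (hφ a).le
      _ ≤ #G * (ε / (2 * #G)) := by
          rw [nsmul_eq_mul]; gcongr
      _ = ε / 2 := by field_simp
  have h₁ := abs_sub_image_le_sum D.abs_δ_insert_sub_le φ A {x}
  have h₂ := abs_sub_image_le_sum hf'.abs_sub_insert_le φ A ∅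
  rw [← insert_eq, ← insert_eq, hx _ (image_subset_image hA)] at h₁
  rw [empty_union, empty_union, maxExt_eq hf hA] at h₂
  calc |D.δ (insert x A) - f A|
      ≤ |D.δ (insert x A) - D.maxExt G f (A.image φ)| + |D.maxExt G f (A.image φ) - f A| :=
        abs_sub_le _ _ _
    _ ≤ ε := by rw [abs_sub_comm]; linarith

theorem ApproxExtensionProp.exists_seq (h : D.ApproxExtensionProp) {F : Finset X}
    {f : Finset X → ℝ} (hf : D.AdmissibleOn F f) :
    ∃ u : ℕ → X, (∀ k, ∀ A ⊆ F, |D.δ (insert (u k) A) - f A| ≤ (1 / 2) ^ k) ∧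
      ∀ k, D.δ {u k, u (k + 1)} ≤ 2 * (1 / 2) ^ k := by
  let State := {s : Finset X × (Finset X → ℝ) //
    F ⊆ s.1 ∧ D.AdmissibleOn s.1 s.2 ∧ ∀ A ⊆ F, s.2 A = f A}
  have step (k : ℕ) (s : State) : ∃ (t : State) (z : X),
      (∀ A ⊆ s.1.1, |D.δ (insert z A) - s.1.2 A| ≤ (1 / 2) ^ k) ∧ z ∈ t.1.1 ∧
        t.1.2 {z} ≤ (1 / 2) ^ k := by
    obtain ⟨⟨G, g⟩, hFG, hg, hgf⟩ := s
    obtain ⟨z, hz⟩ := D.approxExtensionProp_iff.1 h G g hg ((1 / 2) ^ k) (by positivity)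
    obtain ⟨g', hg', hg'g, hg'z⟩ := hg.exists_admissibleOn_insert hz
    exact ⟨⟨(insert z G, g'), hFG.trans (subset_insert z G), hg',
      fun A hA => (hg'g A (hA.trans hFG)).trans (hgf A hA)⟩, z, hz, mem_insert_self z G, hg'z⟩
  choose next z hz hzmem hzle using step
  let s : ℕ → State := fun k => Nat.rec ⟨(F, f), subset_rfl, hf, fun _ _ => rfl⟩ next k
  refine ⟨fun k => z k (s k), fun k A hA => ?_, fun k => ?_⟩
  · simpa only [(s k).2.2.2 A hA] using hz k (s k) A (hA.trans (s k).2.1)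
  · have hmem := singleton_subset_iff.2 (hzmem k (s k))
    have h₁ := (abs_le.1 (hz (k + 1) (s (k + 1)) _ hmem)).2
    have h₂ := (s (k + 1)).2.2.1.nonneg hmem
    have h₃ := hzle k (s k)
    rw [pair_comm]
    rw [pow_succ] at h₁
    linarith [pow_nonneg (by norm_num : (0 : ℝ) ≤ 1 / 2) k]

theorem CompleteD.exists_tendsto_δ (hc : D.CompleteD) {u : ℕ → X}
    (hu : ∀ k, D.δ {u k, u (k + 1)} ≤ 2 * (1 / 2) ^ k) :
    ∃ x, Tendsto (fun k => D.δ {u k, x}) atTop (𝓝 0) := by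
  let := D.toPseudoMetricSpace
  have hcau : CauchySeq u := cauchySeq_of_le_geometric (1 / 2) 2 (by norm_num) hu
  obtain ⟨x, hx⟩ := hc u (Metric.cauchySeq_iff.1 hcau)
  have hlim : Tendsto u atTop (𝓝 x) := Metric.tendsto_atTop.2 hx
  exact ⟨x, tendsto_iff_dist_tendsto_zero.1 hlim⟩

theorem δ_insert_eq_of_tendsto {u : ℕ → X} {x : X}
    (hx : Tendsto (fun k => D.δ {u k, x}) atTop (𝓝 0)) {A : Finset X} {c : ℝ}
    (hu : ∀ k, |D.δ (insert (u k) A) - c| ≤ (1 / 2) ^ k) : D.δ (insert x A) = c := by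
  have hlim : Tendsto (fun k => D.δ {u k, x} + (1 / 2 : ℝ) ^ k) atTop (𝓝 0) := by
    simpa using hx.add (tendsto_pow_atTop_nhds_zero_of_lt_one (r := (1 / 2 : ℝ)) (by norm_num)
      (by norm_num))
  have hle (k : ℕ) : |D.δ (insert x A) - c| ≤ D.δ {u k, x} + (1 / 2) ^ k := by
    calc |D.δ (insert x A) - c|
        ≤ |D.δ (insert x A) - D.δ (insert (u k) A)| + |D.δ (insert (u k) A) - c| :=
          abs_sub_le _ _ _
      _ ≤ D.δ {u k, x} + (1 / 2) ^ k := by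
          rw [abs_sub_comm]; exact add_le_add (D.abs_δ_insert_sub_le A (u k) x) (hu k)
  exact sub_eq_zero.1 (abs_nonpos_iff.1 (ge_of_tendsto' hlim hle))

theorem ApproxExtensionProp.extensionProp (h : D.ApproxExtensionProp) (hc : D.CompleteD) :
    D.ExtensionProp := by
  refine D.extensionProp_iff.2 fun F f hf => ?_
  obtain ⟨u, hu, hcons⟩ := h.exists_seq hf
  obtain ⟨x, hx⟩ := hc.exists_tendsto_δ hcons
  exact ⟨x, fun A hA => δ_insert_eq_of_tendsto hx (hu · A hA)⟩

end

end Diversity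

/-- If a complete diversity has a dense subset whose restricted diversity has the
extension property, then the whole diversity has the extension property. -/
theorem stmt13 {X : Type*} (D : Diversity X) (hc : D.CompleteD) (S : Set X)
    (hdense : ∀ x : X, ∀ ε : ℝ, 0 < ε → ∃ y ∈ S, D.δ {x, y} < ε)
    (hS : (D.restrict S).ExtensionProp) :
    D.ExtensionProp :=
  (Diversity.approxExtensionProp_of_dense hdense hS).extensionProp hc
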